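/- The weak combinatorics of the arrangement 𝒜(31,3) is (31; t₂ = 54, t₃ = 42, t₄ = 21, t₅ = 6, t₆ = 1, t₈ = 3), and t_k = 0 for every other k ≥ 2; that is, the number of points of ℙ²(ℝ) at which exactly k of the 31 forms of 𝒜(31,3) vanish equals 54 for k = 2, 42 for k = 3, 21 for k = 4, 6 for k = 5, 1 for k = 6, 3 for k = 8, and 0 for all other k ≥ 2. -/

import Mathlib

open MvPolynomial

noncomputable section

/-- The polynomial ring `S = ℝ[x,y,z]`. -/
abbrev S : Type := MvPolynomial (Fin 3) ℝ

/-- `e = √3` as a constant polynomial. -/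
def e : S := C (Real.sqrt 3)
def x : S := X 0
def y : S := X 1
def z : S := X 2

/-- The linear form `ℓ` vanishes at the point of `ℙ²(ℝ)` represented by any
nonzero vector mapping to `P`. -/
def Vanish (ℓ : S) (P : Projectivization ℝ (Fin 3 → ℝ)) : Prop :=
  ∀ (v : Fin 3 → ℝ) (hv : v ≠ 0), Projectivization.mk ℝ v hv = P → eval v ℓ = 0

/-- `tk A k` is the number of points of `ℙ²(ℝ)` at which exactly `k` of the
forms of `A` vanish. -/
def tk (A : Finset S) (k : ℕ) : ℕ :=
  {P : Projectivization ℝ (Fin 3 → ℝ) |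
    {ℓ : S | ℓ ∈ A ∧ Vanish ℓ P}.ncard = k}.ncard

/-- The arrangement 𝒜(31,3). -/
def A313 : Finset S :=
  { (z),
    (y),
    (x),
    (e*x+y),
    (e*x-y),
    (x+e*y),
    (x-e*y),
    (2*x+e*z),
    (2*x-e*z),
    (x+e*z),
    (x-e*z),
    (x+e*y+e*z),
    (x+e*y-e*z),
    (x-e*y+e*z),
    (x-e*y-e*z),
    (x+e*y+2*e*z),
    (x+e*y-2*e*z),
    (x-e*y+2*e*z),
    (x-e*y-2*e*z),
    (e*x+y+z),
    (e*x+y-z),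
    (e*x-y+z),
    (e*x-y-z),
    (2*y+z),
    (2*y-z),
    (4*x+e*z),
    (4*x-e*z),
    (2*x-2*e*y+e*z),
    (2*x-2*e*y-e*z),
    (2*x+2*e*y-e*z),
    (2*x+2*e*y+e*z) }

/-!
Two distinct lines `c`, `c'` of `ℙ²(ℝ)` meet exactly in the point `c × c'`. Counting ordered
pairs of distinct lines of an arrangement by their intersection point therefore gives
`k (k - 1) t_k = #{(ℓ, ℓ') | ℓ ≠ ℓ', exactly k lines pass through ℓ ∩ ℓ'}`. All coefficients of
`𝒜(31,3)` lie in `ℤ[√3]`, so the right-hand side is a finite computation in exact arithmetic.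
-/

open Finset Matrix

section DoubleCounting

variable {α β : Type*} (A : Finset β) (I : β → α → Prop)

def incidenceCount (P : α) : ℕ := {ℓ | ℓ ∈ A ∧ I ℓ P}.ncard

variable {A I}

lemma incidenceCount_eq_card_filter (P : α) [DecidablePred (I · P)] :
    incidenceCount A I P = #{ℓ ∈ A | I ℓ P} := by
  rw [incidenceCount, ← Set.ncard_coe_finset, coe_filter]

theorem ncard_setOf_incidenceCount_eq_mul (meet : β → β → α)
    (hmeet : ∀ ℓ ∈ A, ∀ ℓ' ∈ A, ℓ ≠ ℓ' → ∀ P, I ℓ P ∧ I ℓ' P ↔ P = meet ℓ ℓ')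
    {k : ℕ} (hk : 2 ≤ k) :
    {P | incidenceCount A I P = k}.ncard * (k * (k - 1)) =
      #{q ∈ A.offDiag | incidenceCount A I (meet q.1 q.2) = k} := by
  classical
  set F := {q ∈ A.offDiag | incidenceCount A I (meet q.1 q.2) = k}
  have hpoints : {P | incidenceCount A I P = k} = ↑(F.image fun q => meet q.1 q.2) := by
    ext P
    simp only [Set.mem_ofPred_eq, coe_image, Set.mem_image, mem_coe, F, mem_filter, mem_offDiag]
    constructor
    · intro hP
      have : 1 < #{ℓ ∈ A | I ℓ P} := by rw [← incidenceCount_eq_card_filter P]; omega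
      obtain ⟨ℓ, ℓ', hℓ, hℓ', hne⟩ := one_lt_card_iff.mp this
      rw [mem_filter] at hℓ hℓ'
      have hP' := (hmeet ℓ hℓ.1 ℓ' hℓ'.1 hne P).mp ⟨hℓ.2, hℓ'.2⟩
      exact ⟨(ℓ, ℓ'), ⟨⟨hℓ.1, hℓ'.1, hne⟩, hP' ▸ hP⟩, hP'.symm⟩
    · rintro ⟨q, ⟨-, hq⟩, rfl⟩
      exact hq
  have hfiber : ∀ P ∈ F.image (fun q => meet q.1 q.2),
      #{q ∈ F | meet q.1 q.2 = P} = k * (k - 1) := by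
    intro P hP
    have hPk : incidenceCount A I P = k := by
      simpa using (Set.ext_iff.mp hpoints P).mpr hP
    have hoffDiag : {q ∈ F | meet q.1 q.2 = P} = {ℓ ∈ A | I ℓ P}.offDiag := by
      ext ⟨ℓ, ℓ'⟩
      simp only [F, mem_filter, mem_offDiag]
      constructor
      · rintro ⟨⟨⟨hℓ, hℓ', hne⟩, -⟩, hP⟩
        have := (hmeet ℓ hℓ ℓ' hℓ' hne P).mpr hP.symm
        exact ⟨⟨hℓ, this.1⟩, ⟨hℓ', this.2⟩, hne⟩
      · rintro ⟨⟨hℓ, hIℓ⟩, ⟨hℓ', hIℓ'⟩, hne⟩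
        have := ((hmeet ℓ hℓ ℓ' hℓ' hne P).mp ⟨hIℓ, hIℓ'⟩).symm
        exact ⟨⟨⟨hℓ, hℓ', hne⟩, this ▸ hPk⟩, this⟩
    rw [hoffDiag, offDiag_card, ← incidenceCount_eq_card_filter, hPk, Nat.mul_sub_one]
  rw [hpoints, Set.ncard_coe_finset, card_eq_sum_card_image (fun q => meet q.1 q.2) F,
    sum_const_nat hfiber]

end DoubleCounting

theorem Projectivization.mk_eq_mk_crossProduct_iff {F : Type*} [Field F] {c c' v : Fin 3 → F}
    (hv : v ≠ 0) (h : c ⨯₃ c' ≠ 0) :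
    mk F v hv = mk F (c ⨯₃ c') h ↔ c ⬝ᵥ v = 0 ∧ c' ⬝ᵥ v = 0 := by
  rw [mk_eq_mk_iff_crossProduct_eq_zero, cross_cross_eq_smul_sub_smul', dotProduct_comm v,
    sub_eq_zero]
  constructor
  · intro hlin
    have hind : LinearIndependent F ![c, c'] := crossProduct_ne_zero_iff_linearIndependent.mp h
    have := LinearIndependent.pair_iff.mp hind (c' ⬝ᵥ v) (-(c ⬝ᵥ v))
      (by rw [neg_smul, ← sub_eq_add_neg, hlin, sub_self])
    exact ⟨neg_eq_zero.mp this.2, this.1⟩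
  · rintro ⟨h₁, h₂⟩
    rw [h₁, h₂, zero_smul, zero_smul]

def linearForm (c : Fin 3 → ℝ) : S := C (c 0) * x + C (c 1) * y + C (c 2) * z

lemma eval_linearForm (c v : Fin 3 → ℝ) : eval v (linearForm c) = c ⬝ᵥ v := by
  simp [linearForm, x, y, z, vec3_dotProduct]

lemma linearForm_injective : Function.Injective linearForm := by
  intro c c' h
  funext i
  simpa [eval_linearForm] using congrArg (eval (Pi.single i 1)) h

lemma vanish_linearForm_mk_iff (c v : Fin 3 → ℝ) (hv : v ≠ 0) :
    Vanish (linearForm c) (Projectivization.mk ℝ v hv) ↔ c ⬝ᵥ v = 0 := by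
  refine ⟨fun h => eval_linearForm c v ▸ h v hv rfl, fun h w hw hwv => ?_⟩
  obtain ⟨a, rfl⟩ := (Projectivization.mk_eq_mk_iff' ℝ w v hw hv).mp hwv
  rw [eval_linearForm, dotProduct_smul, h, smul_zero]

abbrev Vec := ℤ√3 × ℤ√3 × ℤ√3

def dot (u v : Vec) : ℤ√3 := u.1 * v.1 + u.2.1 * v.2.1 + u.2.2 * v.2.2

def cross (u v : Vec) : Vec :=
  (u.2.1 * v.2.2 - u.2.2 * v.2.1, u.2.2 * v.1 - u.1 * v.2.2, u.1 * v.2.1 - u.2.1 * v.1)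

def embed : ℤ√3 →+* ℝ := Zsqrtd.toReal (by norm_num)

lemma embed_injective : Function.Injective embed :=
  Zsqrtd.toReal_injective _ fun n h =>
    absurd ((Int.exists_mul_self 3).mp ⟨n, h.symm⟩) (by decide +kernel)

def realVec (v : Vec) : Fin 3 → ℝ := ![embed v.1, embed v.2.1, embed v.2.2]

lemma realVec_injective : Function.Injective realVec := by
  rintro ⟨a, b, c⟩ ⟨a', b', c'⟩ h
  simp only [realVec, Matrix.vecCons_inj, embed_injective.eq_iff] at h
  simp [h]

lemma realVec_eq_zero_iff {v : Vec} : realVec v = 0 ↔ v = 0 :=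
  realVec_injective.eq_iff' (by simp [realVec])

lemma realVec_cross (u v : Vec) : realVec (cross u v) = realVec u ⨯₃ realVec v := by
  simp [realVec, cross, cross_apply]

lemma realVec_dotProduct (u v : Vec) : realVec u ⬝ᵥ realVec v = embed (dot u v) := by
  simp [realVec, dot, add_assoc]

def form (c : Vec) : S := linearForm (realVec c)

lemma form_injective : Function.Injective form :=
  linearForm_injective.comp realVec_injective

/-- The point `[p]` of `ℙ²(ℝ)`; its value at `p = 0` is arbitrary. -/
def toPoint (p : Vec) : Projectivization ℝ (Fin 3 → ℝ) :=
  if h : realVec p = 0 then Classical.arbitrary _ else Projectivization.mk ℝ (realVec p) h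

lemma toPoint_of_ne_zero {p : Vec} (hp : p ≠ 0) :
    toPoint p = Projectivization.mk ℝ (realVec p) (realVec_eq_zero_iff.not.mpr hp) :=
  dif_neg _

lemma vanish_form_toPoint_iff (c : Vec) {p : Vec} (hp : p ≠ 0) :
    Vanish (form c) (toPoint p) ↔ dot c p = 0 := by
  rw [toPoint_of_ne_zero hp, form, vanish_linearForm_mk_iff, realVec_dotProduct,
    map_eq_zero_iff _ embed_injective]

lemma vanish_form_and_vanish_form_iff {c c' : Vec} (h : cross c c' ≠ 0)
    (P : Projectivization ℝ (Fin 3 → ℝ)) :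
    Vanish (form c) P ∧ Vanish (form c') P ↔ P = toPoint (cross c c') := by
  induction P using Projectivization.ind with | h v hv => ?_
  simp only [form, vanish_linearForm_mk_iff, toPoint_of_ne_zero h, realVec_cross]
  rw [Projectivization.mk_eq_mk_crossProduct_iff]

def lineCount (L : Finset Vec) (p : Vec) : ℕ := #{c ∈ L | dot c p = 0}

lemma incidenceCount_toPoint (L : Finset Vec) {p : Vec} (hp : p ≠ 0) :
    incidenceCount L (fun c => Vanish (form c)) (toPoint p) = lineCount L p := by
  classical
  rw [incidenceCount_eq_card_filter, lineCount]
  exact congrArg card (filter_congr fun c _ => vanish_form_toPoint_iff c hp)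

lemma tk_image_form (L : Finset Vec) (k : ℕ) :
    tk (L.image form) k = {P | incidenceCount L (fun c => Vanish (form c)) P = k}.ncard := by
  have (P : Projectivization ℝ (Fin 3 → ℝ)) :
      {ℓ | ℓ ∈ L.image form ∧ Vanish ℓ P} = form '' {c | c ∈ L ∧ Vanish (form c) P} := by
    ext ℓ
    simp only [Set.mem_ofPred_eq, mem_image, Set.mem_image]
    grind
  simp only [tk, incidenceCount, this, Set.ncard_image_of_injective _ form_injective]

theorem tk_image_form_mul (L : Finset Vec) (hL : ∀ c ∈ L, ∀ c' ∈ L, c ≠ c' → cross c c' ≠ 0)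
    {k : ℕ} (hk : 2 ≤ k) :
    tk (L.image form) k * (k * (k - 1)) = #{q ∈ L.offDiag | lineCount L (cross q.1 q.2) = k} := by
  rw [tk_image_form, ncard_setOf_incidenceCount_eq_mul (fun c c' => toPoint (cross c c'))
    (fun c hc c' hc' hne => vanish_form_and_vanish_form_iff (hL c hc c' hc' hne)) hk]
  refine congrArg card (filter_congr fun q hq => ?_)
  rw [mem_offDiag] at hq
  rw [incidenceCount_toPoint L (hL _ hq.1 _ hq.2.1 hq.2.2)]

lemma card_filter_offDiag_eq_countP {α : Type*} {s : Finset α} {l : List α} (hs : s.val = l)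
    (p : α × α → Prop) [DecidablePred p] : #{q ∈ s.offDiag | p q} = l.offDiag.countP p := by
  obtain ⟨_, _⟩ := s
  subst hs
  rw [List.countP_eq_length_filter]
  rfl

lemma card_filter_eq_countP {α : Type*} {s : Finset α} {l : List α} (hs : s.val = l)
    (p : α → Prop) [DecidablePred p] : #{a ∈ s | p a} = l.countP p := by
  obtain ⟨_, _⟩ := s
  subst hs
  rw [List.countP_eq_length_filter]
  rfl

-- The coefficient vectors of the forms of `A313`, in the same order; `⟨a, b⟩ : ℤ√3` is `a + b√3`.
def lines313 : List Vec := [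
  (⟨0, 0⟩, ⟨0, 0⟩, ⟨1, 0⟩),
  (⟨0, 0⟩, ⟨1, 0⟩, ⟨0, 0⟩),
  (⟨1, 0⟩, ⟨0, 0⟩, ⟨0, 0⟩),
  (⟨0, 1⟩, ⟨1, 0⟩, ⟨0, 0⟩),
  (⟨0, 1⟩, ⟨-1, 0⟩, ⟨0, 0⟩),
  (⟨1, 0⟩, ⟨0, 1⟩, ⟨0, 0⟩),
  (⟨1, 0⟩, ⟨0, -1⟩, ⟨0, 0⟩),
  (⟨2, 0⟩, ⟨0, 0⟩, ⟨0, 1⟩),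
  (⟨2, 0⟩, ⟨0, 0⟩, ⟨0, -1⟩),
  (⟨1, 0⟩, ⟨0, 0⟩, ⟨0, 1⟩),
  (⟨1, 0⟩, ⟨0, 0⟩, ⟨0, -1⟩),
  (⟨1, 0⟩, ⟨0, 1⟩, ⟨0, 1⟩),
  (⟨1, 0⟩, ⟨0, 1⟩, ⟨0, -1⟩),
  (⟨1, 0⟩, ⟨0, -1⟩, ⟨0, 1⟩),
  (⟨1, 0⟩, ⟨0, -1⟩, ⟨0, -1⟩),
  (⟨1, 0⟩, ⟨0, 1⟩, ⟨0, 2⟩),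
  (⟨1, 0⟩, ⟨0, 1⟩, ⟨0, -2⟩),
  (⟨1, 0⟩, ⟨0, -1⟩, ⟨0, 2⟩),
  (⟨1, 0⟩, ⟨0, -1⟩, ⟨0, -2⟩),
  (⟨0, 1⟩, ⟨1, 0⟩, ⟨1, 0⟩),
  (⟨0, 1⟩, ⟨1, 0⟩, ⟨-1, 0⟩),
  (⟨0, 1⟩, ⟨-1, 0⟩, ⟨1, 0⟩),
  (⟨0, 1⟩, ⟨-1, 0⟩, ⟨-1, 0⟩),
  (⟨0, 0⟩, ⟨2, 0⟩, ⟨1, 0⟩),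
  (⟨0, 0⟩, ⟨2, 0⟩, ⟨-1, 0⟩),
  (⟨4, 0⟩, ⟨0, 0⟩, ⟨0, 1⟩),
  (⟨4, 0⟩, ⟨0, 0⟩, ⟨0, -1⟩),
  (⟨2, 0⟩, ⟨0, -2⟩, ⟨0, 1⟩),
  (⟨2, 0⟩, ⟨0, -2⟩, ⟨0, -1⟩),
  (⟨2, 0⟩, ⟨0, 2⟩, ⟨0, -1⟩),
  (⟨2, 0⟩, ⟨0, 2⟩, ⟨0, 1⟩)]

def lineSet313 : Finset Vec := ⟨lines313, by decide⟩

lemma image_form_lineSet313 : lineSet313.image form = A313 := by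
  simp only [lineSet313, image, Multiset.map_coe, lines313, List.map_cons, List.map_nil, A313]
  simp only [form, linearForm, realVec, embed, Zsqrtd.toReal_apply, Int.cast_zero, Int.cast_ofNat,
    zero_mul, add_zero, Int.cast_one, cons_val_zero, C_0, cons_val_one, Matrix.cons_val, C_1,
    one_mul, zero_add, Int.reduceNeg, Int.cast_neg, C_neg, neg_mul, map_ofNat, C_mul,
    List.toFinset_coe, List.toFinset_cons, List.toFinset_nil, insert_empty_eq, e]
  ring_nf

lemma card_A313 : A313.card = 31 := by
  rw [← image_form_lineSet313, card_image_of_injective _ form_injective]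
  rfl

lemma cross_ne_zero_of_mem_lineSet313 :
    ∀ c ∈ lineSet313, ∀ c' ∈ lineSet313, c ≠ c' → cross c c' ≠ 0 := by
  decide +kernel

def pairMultiplicities : List ℕ :=
  lines313.offDiag.map fun q => lines313.countP (dot · (cross q.1 q.2) = 0)

lemma card_filter_offDiag_eq_count (k : ℕ) :
    #{q ∈ lineSet313.offDiag | lineCount lineSet313 (cross q.1 q.2) = k} =
      pairMultiplicities.count k := by
  rw [pairMultiplicities, List.count_eq_countP, List.countP_map,
    card_filter_offDiag_eq_countP (l := lines313) rfl]
  refine List.countP_congr fun q _ => ?_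
  rw [lineCount, card_filter_eq_countP (l := lines313) rfl]
  simp

-- `108 = 2·1·54`, `252 = 3·2·42 = 4·3·21`, `120 = 5·4·6`, `30 = 6·5·1`, `168 = 8·7·3`.
lemma pairMultiplicities_spec :
    (∀ m ∈ pairMultiplicities, m ∈ [2, 3, 4, 5, 6, 8]) ∧
      pairMultiplicities.count 2 = 108 ∧ pairMultiplicities.count 3 = 252 ∧
      pairMultiplicities.count 4 = 252 ∧ pairMultiplicities.count 5 = 120 ∧
      pairMultiplicities.count 6 = 30 ∧ pairMultiplicities.count 8 = 168 := by
  decide +kernel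

theorem stmt_6 :
    A313.card = 31 ∧
    tk A313 2 = 54 ∧ tk A313 3 = 42 ∧ tk A313 4 = 21 ∧
    tk A313 5 = 6 ∧ tk A313 6 = 1 ∧ tk A313 8 = 3 ∧
    ∀ k : ℕ, 2 ≤ k → k ∉ ({2, 3, 4, 5, 6, 8} : Set ℕ) → tk A313 k = 0 := by
  have key (k : ℕ) (hk : 2 ≤ k) : tk A313 k * (k * (k - 1)) = pairMultiplicities.count k := by
    rw [← image_form_lineSet313, tk_image_form_mul lineSet313 cross_ne_zero_of_mem_lineSet313 hk,
      card_filter_offDiag_eq_count]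
  obtain ⟨hmem, h2, h3, h4, h5, h6, h8⟩ := pairMultiplicities_spec
  refine ⟨card_A313, ?_, ?_, ?_, ?_, ?_, ?_, fun k hk hks => ?_⟩
  · have := key 2 le_rfl; omega
  · have := key 3 (by norm_num); omega
  · have := key 4 (by norm_num); omega
  · have := key 5 (by norm_num); omega
  · have := key 6 (by norm_num); omega
  · have := key 8 (by norm_num); omega
  · have hcount : pairMultiplicities.count k = 0 :=
      List.count_eq_zero.mpr fun hk' => hks (by simpa using hmem k hk')
    have hpos : 0 < k * (k - 1) := Nat.mul_pos (by omega) (by omega)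
    have := key k hk
    rw [hcount] at this
    exact (Nat.mul_eq_zero.mp this).resolve_right hpos.ne'
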